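/- The function g(t) = t/(log₂(2+t))² is concave on [0, ∞). -/

import Mathlib

noncomputable def g (t : ℝ) : ℝ := t / (Real.logb 2 (2 + t)) ^ 2

open Real Set

/-! With `u = 2 + t`, `g` is `(log 2)²` times `(u - 2) / log u ^ 2`, whose second derivative
has the sign of `3 (u - 2) - (u + 2) log u`. This is nonpositive for `u ≥ 2` by the bounds
`log u ≥ s + 1 - e^s / u` (that is, `log x ≥ 1 - 1/x` at `x = u / e^s`) with `s = 1` on `[2, 6]`
and `s = 2` on `[6, ∞)`. -/

lemma add_one_sub_exp_div_le_log (s : ℝ) {u : ℝ} (hu : 0 < u) : s + 1 - exp s / u ≤ log u := by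
  have h := one_sub_inv_le_log_of_pos (div_pos hu (exp_pos s))
  rw [inv_div, log_div hu.ne' (exp_pos s).ne', log_exp] at h
  linarith

lemma three_mul_sub_six_le_add_two_mul_log {u : ℝ} (hu : 2 ≤ u) :
    3 * u - 6 ≤ (u + 2) * log u := by
  have hu₀ : 0 < u := by linarith
  have he : exp 1 < 3 := exp_one_lt_three
  rcases le_total u 6 with h6 | h6
  · calc 3 * u - 6 ≤ (u + 2) * (1 + 1 - exp 1 / u) := by
          rw [mul_sub, mul_div_assoc', le_sub_iff_add_le, ← le_sub_iff_add_le', div_le_iff₀ hu₀]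
          nlinarith [exp_pos 1]
      _ ≤ (u + 2) * log u := by gcongr; exact add_one_sub_exp_div_le_log 1 hu₀
  · have he2 : exp 2 < 9 := by
      rw [show (2 : ℝ) = 1 + 1 by norm_num, exp_add]; nlinarith [exp_pos 1]
    calc 3 * u - 6 ≤ (u + 2) * (2 + 1 - exp 2 / u) := by
          rw [mul_sub, mul_div_assoc', le_sub_iff_add_le, ← le_sub_iff_add_le', div_le_iff₀ hu₀]
          nlinarith [exp_pos 2]
      _ ≤ (u + 2) * log u := by gcongr; exact add_one_sub_exp_div_le_log 2 hu₀

lemma hasDerivAt_sub_two_div_log_sq {u : ℝ} (hu : 1 < u) :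
    HasDerivAt (fun u => (u - 2) / log u ^ 2)
      ((u * log u - 2 * (u - 2)) / (u * log u ^ 3)) u := by
  have hu₀ : u ≠ 0 := by positivity
  have hlog : log u ≠ 0 := (log_pos hu).ne'
  refine (((hasDerivAt_id u).sub_const 2).div ((hasDerivAt_log hu₀).pow 2)
    (pow_ne_zero 2 hlog)).congr_deriv ?_
  simp only [id, Pi.pow_apply]
  field_simp
  ring

lemma hasDerivAt_deriv_sub_two_div_log_sq {u : ℝ} (hu : 1 < u) :
    HasDerivAt (fun u => (u * log u - 2 * (u - 2)) / (u * log u ^ 3))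
      ((6 * (u - 2) - (2 * u + 4) * log u) / (u ^ 2 * log u ^ 4)) u := by
  have hu₀ : u ≠ 0 := by positivity
  have hlog : log u ≠ 0 := (log_pos hu).ne'
  have hL := hasDerivAt_log hu₀
  refine ((((hasDerivAt_id u).mul hL).sub (((hasDerivAt_id u).sub_const 2).const_mul 2)).div
    ((hasDerivAt_id u).mul (hL.pow 3)) (mul_ne_zero hu₀ (pow_ne_zero 3 hlog))).congr_deriv ?_
  simp only [id, Pi.pow_apply, Pi.mul_apply, Pi.sub_apply]
  field_simp
  ring

lemma concaveOn_sub_two_div_log_sq : ConcaveOn ℝ (Ici 2) fun u => (u - 2) / log u ^ 2 := by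
  have hcont : ContinuousOn (fun u => (u - 2) / log u ^ 2) (Ici 2) := by
    refine ContinuousOn.div (by fun_prop) ((continuousOn_log.mono ?_).pow 2) ?_
    · intro u (hu : 2 ≤ u); simp; linarith
    · intro u (hu : 2 ≤ u); exact pow_ne_zero 2 (log_pos (by linarith)).ne'
  refine concaveOn_of_hasDerivWithinAt2_nonpos (convex_Ici 2) hcont
    (f' := fun u => (u * log u - 2 * (u - 2)) / (u * log u ^ 3))
    (f'' := fun u => (6 * (u - 2) - (2 * u + 4) * log u) / (u ^ 2 * log u ^ 4)) ?_ ?_ ?_ <;>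
    simp only [interior_Ici, mem_Ioi]
  · exact fun u hu => (hasDerivAt_sub_two_div_log_sq (one_lt_two.trans hu)).hasDerivWithinAt
  · exact fun u hu => (hasDerivAt_deriv_sub_two_div_log_sq (one_lt_two.trans hu)).hasDerivWithinAt
  · refine fun u hu => div_nonpos_of_nonpos_of_nonneg ?_ (by positivity)
    linarith [three_mul_sub_six_le_add_two_mul_log hu.le]

theorem stmt_2 : ConcaveOn ℝ (Set.Ici 0) g := by
  have hpre : (fun t : ℝ => 2 + t) ⁻¹' Ici 2 = Ici 0 := by ext; simp
  have h := (concaveOn_sub_two_div_log_sq.translate_right 2).smul (sq_nonneg (log 2))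
  rw [hpre] at h
  refine h.congr fun t _ => ?_
  simp only [g, logb, div_pow, Function.comp_apply, smul_eq_mul, add_sub_cancel_left]
  field_simp
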